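/- arXiv:2112.00308 — 4 statements merged into one kernel-verified Lean document; each statement's English description precedes it below -/
import Mathlib

section
/- Let N ≥ 2 be an integer, let d be a positive integer, and let z_1, …, z_N : ℕ → ℂ be sequences. Define t(k) = ∑ z_1(i_1)·z_2(i_2)⋯z_N(i_N), the sum being over all N-tuples (i_1,…,i_N) of nonnegative integers with i_1 + ⋯ + i_N = k. Suppose that for every j ∈ {1,…,N} and every k ∈ ℕ with (d−1)/N < k < d one has z_j(k) = 0. Then ∑_{k=0}^{d−1} t(k) = ∏_{j=1}^{N} ( ∑_{k=0}^{d−1} z_j(k) ). -/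
/-!
Expanding the product gives the sum of `∏ j, z j (v j)` over all `v` with coordinates below `d`;
those with `∑ v < d` are exactly the terms on the left. Every other `v` has `∑ v ≥ d`, so by
pigeonhole some coordinate exceeds `(d - 1) / N` while staying below `d`, and its term vanishes.
-/

open Finset

theorem Finset.sum_range_sum_antidiagonalTuple {M : Type*} [AddCommMonoid M] (n d : ℕ)
    (g : (Fin n → ℕ) → M) :
    ∑ k ∈ range d, ∑ v ∈ Nat.antidiagonalTuple n k, g v =
      ∑ v ∈ Fintype.piFinset (fun _ => range d) with ∑ i, v i < d, g v := by
  rw [← sum_biUnion]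
  · congr 1
    ext v
    simp only [mem_biUnion, mem_range, Nat.mem_antidiagonalTuple, mem_filter,
      Fintype.mem_piFinset, exists_eq_right']
    refine ⟨fun h => ⟨fun i => ?_, h⟩, And.right⟩
    exact (single_le_sum (fun i _ => Nat.zero_le (v i)) (mem_univ i)).trans_lt h
  · intro k _ l _ hkl
    refine disjoint_left.mpr fun v hk hl => hkl ?_
    rw [Nat.mem_antidiagonalTuple] at hk hl
    rw [← hk, ← hl]

theorem exists_div_lt_of_le_sum {N d : ℕ} (hN : 0 < N) (v : Fin N → ℕ) (h : d ≤ ∑ i, v i) :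
    ∃ j, ((d : ℚ) - 1) / N < v j := by
  have hN' : (N : ℚ) ≠ 0 := by positivity
  have hlt : ∑ _j : Fin N, ((d : ℚ) - 1) / N < ∑ j, (v j : ℚ) :=
    calc ∑ _j : Fin N, ((d : ℚ) - 1) / N = d - 1 := by
          rw [sum_const, card_univ, Fintype.card_fin, nsmul_eq_mul, mul_div_cancel₀ _ hN']
      _ < d := sub_one_lt _
      _ ≤ ∑ j, (v j : ℚ) := mod_cast h
  obtain ⟨j, -, hj⟩ := exists_lt_of_sum_lt hlt
  exact ⟨j, hj⟩

theorem stmt_0_general (N d : ℕ) (hN : 2 ≤ N) (z : Fin N → ℕ → ℂ)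
    (hz : ∀ j : Fin N, ∀ k : ℕ, ((d : ℚ) - 1) / N < (k : ℚ) → k < d → z j k = 0) :
    ∑ k ∈ Finset.range d,
        ∑ v ∈ Finset.Nat.antidiagonalTuple N k, ∏ j : Fin N, z j (v j) =
      ∏ j : Fin N, ∑ k ∈ Finset.range d, z j k := by
  rw [sum_range_sum_antidiagonalTuple, prod_univ_sum]
  refine sum_filter_of_ne fun v hv hne => ?_
  by_contra! hsum
  obtain ⟨j, hj⟩ := exists_div_lt_of_le_sum (by omega) v hsum
  have hj_lt : v j < d := mem_range.mp (Fintype.mem_piFinset.mp hv j)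
  exact hne (prod_eq_zero (mem_univ j) (hz j _ hj hj_lt))

theorem stmt_0 (N d : ℕ) (hN : 2 ≤ N) (hd : 0 < d) (z : Fin N → ℕ → ℂ)
    (hz : ∀ j : Fin N, ∀ k : ℕ, ((d : ℚ) - 1) / N < (k : ℚ) → k < d → z j k = 0) :
    ∑ k ∈ Finset.range d,
        ∑ v ∈ Finset.Nat.antidiagonalTuple N k, ∏ j : Fin N, z j (v j) =
      ∏ j : Fin N, ∑ k ∈ Finset.range d, z j k :=
  stmt_0_general N d hN z hz
end

section
/- Let N ≥ 2 be an integer, let d be a positive integer, and let z_1, …, z_N : ℕ → ℂ be sequences. Define t(k) = ∑ z_1(i_1)·z_2(i_2)⋯z_N(i_N), the sum being over all N-tuples (i_1,…,i_N) of nonnegative integers with i_1 + ⋯ + i_N = k. Suppose that for every j ∈ {1,…,N} and every k ∈ ℕ with (d−1)/N < k < d one has z_j(k) = 0, and moreover that z_j(l·d + k) = z_j(l·d)·z_j(k) for every j ∈ {1,…,N} and all k, l ∈ ℕ with 0 ≤ k < d. Then for all k, l ∈ ℕ with 0 ≤ k < d, t(l·d + k) = t(k) · ∑ z_1(i_1·d)·z_2(i_2·d)⋯z_N(i_N·d),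 where the last sum is over all N-tuples (i_1,…,i_N) of nonnegative integers with i_1 + ⋯ + i_N = l. -/
/-!
Write each index as `v j = q j * d + r j` with `r j < d`. If the term of `t (l * d + k)` indexed
by `v` is nonzero then, by multiplicativity, every `z j (r j)` is nonzero, so `r j * N < d` and
hence `∑ j, r j < d`. Comparing `∑ j, v j = (∑ j, q j) * d + ∑ j, r j` with `l * d + k` then forces
`∑ j, r j = k` and `∑ j, q j = l`, and the term factors as the `r`-term of `t k` times the
`q`-term of the dilated sum. Thus `(r, q) ↦ q * d + r` matches the nonzero terms on both sides.
-/

open Finset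

theorem Nat.eq_and_eq_of_mul_add_eq_mul_add {a b l k d : ℕ} (hb : b < d) (hk : k < d)
    (h : a * d + b = l * d + k) : a = l ∧ b = k := by
  have hd : 0 < d := by omega
  have hmod := congrArg (· % d) h
  have hdiv := congrArg (· / d) h
  simp only [Nat.mul_add_mod', Nat.mod_eq_of_lt hb, Nat.mod_eq_of_lt hk] at hmod
  simp only [Nat.add_comm _ b, Nat.add_comm _ k, Nat.add_mul_div_right _ _ hd,
    Nat.div_eq_of_lt hb, Nat.div_eq_of_lt hk, Nat.zero_add] at hdiv
  exact ⟨hdiv, hmod⟩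

theorem Nat.sum_div_mul_add_sum_mod {ι : Type*} (s : Finset ι) (v : ι → ℕ) (d : ℕ) :
    (∑ j ∈ s, v j / d) * d + ∑ j ∈ s, v j % d = ∑ j ∈ s, v j := by
  rw [Finset.sum_mul, ← Finset.sum_add_distrib]
  exact Finset.sum_congr rfl fun j _ => Nat.div_add_mod' (v j) d

theorem Fin.sum_lt_of_forall_mul_lt {N d : ℕ} {r : Fin N → ℕ} (hd : 0 < d)
    (h : ∀ j, r j * N < d) : ∑ j, r j < d := by
  rcases N.eq_zero_or_pos with rfl | hN
  · simpa using hd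
  refine Nat.lt_of_mul_lt_mul_right (a := N) ?_
  calc (∑ j, r j) * N = ∑ j, r j * N := Finset.sum_mul ..
    _ < ∑ _j : Fin N, d := Finset.sum_lt_sum_of_nonempty ⟨⟨0, hN⟩, mem_univ _⟩ fun j _ => h j
    _ = d * N := by simp [mul_comm]

theorem Rat.sub_one_div_lt_of_le_mul {d r N : ℕ} (h : d ≤ r * N) (hN : 0 < N) :
    ((d : ℚ) - 1) / N < r := by
  rw [div_lt_iff₀ (by exact_mod_cast hN)]
  have : (d : ℚ) ≤ r * N := by exact_mod_cast h
  linarith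

namespace Finset.Nat

variable {N : ℕ}

theorem le_of_mem_antidiagonalTuple {k : ℕ} {r : Fin N → ℕ} (hr : r ∈ antidiagonalTuple N k)
    (j : Fin N) : r j ≤ k := by
  rw [mem_antidiagonalTuple] at hr
  exact hr ▸ Finset.single_le_sum (fun i _ => Nat.zero_le _) (Finset.mem_univ j)

theorem mul_add_mem_antidiagonalTuple {d k l : ℕ} {q r : Fin N → ℕ}
    (hr : r ∈ antidiagonalTuple N k) (hq : q ∈ antidiagonalTuple N l) :
    (fun j => q j * d + r j) ∈ antidiagonalTuple N (l * d + k) := by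
  rw [mem_antidiagonalTuple] at *
  rw [Finset.sum_add_distrib, ← Finset.sum_mul, hr, hq]

end Finset.Nat

/-- The coefficient of `X ^ n` in `∏ j, ∑ i, z j i * X ^ i`. -/
def cauchyProduct {R : Type*} [CommSemiring R] {N : ℕ} (z : Fin N → ℕ → R) (n : ℕ) : R :=
  ∑ v ∈ Nat.antidiagonalTuple N n, ∏ j, z j (v j)

section

variable {R : Type*} [CommSemiring R] {N d : ℕ} (z : Fin N → ℕ → R)

theorem prod_mul_add_eq_prod_mul_prod
    (hmul : ∀ j : Fin N, ∀ k l : ℕ, k < d → z j (l * d + k) = z j (l * d) * z j k)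
    {q r : Fin N → ℕ} (hr : ∀ j, r j < d) :
    ∏ j, z j (q j * d + r j) = (∏ j, z j (r j)) * ∏ j, z j (q j * d) := by
  rw [← Finset.prod_mul_distrib]
  exact Finset.prod_congr rfl fun j _ => by rw [hmul j _ _ (hr j), mul_comm]

theorem cauchyProduct_mul_add (hsmall : ∀ j r, r < d → z j r ≠ 0 → r * N < d)
    (hmul : ∀ j : Fin N, ∀ k l : ℕ, k < d → z j (l * d + k) = z j (l * d) * z j k)
    {k : ℕ} (hk : k < d) (l : ℕ) :
    cauchyProduct z (l * d + k) = cauchyProduct z k * cauchyProduct (fun j q => z j (q * d)) l := by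
  have hd : 0 < d := by omega
  have hlt {r : Fin N → ℕ} (hr : r ∈ Nat.antidiagonalTuple N k) (j : Fin N) : r j < d :=
    (Nat.le_of_mem_antidiagonalTuple hr j).trans_lt hk
  unfold cauchyProduct
  rw [sum_mul_sum, ← sum_product']
  symm
  refine sum_bij_ne_zero (fun p _ _ j => p.2 j * d + p.1 j) ?_ ?_ ?_ ?_
  · rintro ⟨r, q⟩ hp -
    exact Nat.mul_add_mem_antidiagonalTuple (mem_product.1 hp).1 (mem_product.1 hp).2
  · rintro ⟨r, q⟩ hp - ⟨r', q'⟩ hp' - h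
    have hqr j := Nat.eq_and_eq_of_mul_add_eq_mul_add (hlt (mem_product.1 hp).1 j)
      (hlt (mem_product.1 hp').1 j) (congrFun h j)
    exact Prod.ext (funext fun j => (hqr j).2) (funext fun j => (hqr j).1)
  · intro v hv hne
    have hsplit : ∏ j, z j (v j) = (∏ j, z j (v j % d)) * ∏ j, z j (v j / d * d) := by
      simpa only [Nat.div_add_mod'] using
        prod_mul_add_eq_prod_mul_prod z hmul (q := fun j => v j / d) fun j => Nat.mod_lt (v j) hd
    have hsum_mod : ∑ j, v j % d < d := by
      refine Fin.sum_lt_of_forall_mul_lt hd fun j => hsmall j _ (Nat.mod_lt _ hd) fun h0 => hne ?_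
      rw [hsplit, prod_eq_zero (mem_univ j) h0, zero_mul]
    obtain ⟨hl, hk⟩ := Nat.eq_and_eq_of_mul_add_eq_mul_add hsum_mod hk
      ((Nat.sum_div_mul_add_sum_mod _ v d).trans (Nat.mem_antidiagonalTuple.1 hv))
    refine ⟨(fun j => v j % d, fun j => v j / d), ?_, hsplit ▸ hne, funext fun j => ?_⟩
    · exact mem_product.2 ⟨Nat.mem_antidiagonalTuple.2 hk, Nat.mem_antidiagonalTuple.2 hl⟩
    · exact Nat.div_add_mod' _ _
  · rintro ⟨r, q⟩ hp -
    exact (prod_mul_add_eq_prod_mul_prod z hmul (hlt (mem_product.1 hp).1)).symm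

end

theorem stmt_1_general (N d : ℕ) (z : Fin N → ℕ → ℂ)
    (hz : ∀ j : Fin N, ∀ k : ℕ, ((d : ℚ) - 1) / N < (k : ℚ) → k < d → z j k = 0)
    (hmul : ∀ j : Fin N, ∀ k l : ℕ, k < d → z j (l * d + k) = z j (l * d) * z j k) :
    ∀ k l : ℕ, k < d →
      ∑ v ∈ Finset.Nat.antidiagonalTuple N (l * d + k), ∏ j : Fin N, z j (v j) =
        (∑ v ∈ Finset.Nat.antidiagonalTuple N k, ∏ j : Fin N, z j (v j)) *
          ∑ v ∈ Finset.Nat.antidiagonalTuple N l, ∏ j : Fin N, z j (v j * d) := by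
  intro k l hk
  have hsmall (j : Fin N) (r : ℕ) (hr : r < d) (hne : z j r ≠ 0) : r * N < d := by
    by_contra! hle
    have hN : 0 < N := Nat.pos_of_ne_zero (by rintro rfl; omega)
    exact hne (hz j r (Rat.sub_one_div_lt_of_le_mul hle hN) hr)
  exact cauchyProduct_mul_add z hsmall hmul hk l

theorem stmt_1 (N d : ℕ) (hN : 2 ≤ N) (hd : 0 < d) (z : Fin N → ℕ → ℂ)
    (hz : ∀ j : Fin N, ∀ k : ℕ, ((d : ℚ) - 1) / N < (k : ℚ) → k < d → z j k = 0)
    (hmul : ∀ j : Fin N, ∀ k l : ℕ, k < d → z j (l * d + k) = z j (l * d) * z j k) :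
    ∀ k l : ℕ, k < d →
      ∑ v ∈ Finset.Nat.antidiagonalTuple N (l * d + k), ∏ j : Fin N, z j (v j) =
        (∑ v ∈ Finset.Nat.antidiagonalTuple N k, ∏ j : Fin N, z j (v j)) *
          ∑ v ∈ Finset.Nat.antidiagonalTuple N l, ∏ j : Fin N, z j (v j * d) :=
  stmt_1_general N d z hz hmul
end

section
/- If p is a prime with p ≡ 1 (mod 3), then ∑_{k=0}^{p−1} ∑_{j=0}^{k} ∑_{i=0}^{k−j} (−1)^k · ((1/3)_j^3 / (j!)^3) · ((1/3)_i^3 / (i!)^3) · ((1/3)_{k−j−i}^3 / ((k−j−i)!)^3) · (6i+1)·(6j+1)·(6(k−j−i)+1) ≡ 0 (mod p^3), where the sum is a rational number. -/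
/-- The Pochhammer symbol `(a)_k = a·(a+1)⋯(a+k-1)` for a rational `a`. -/
def poch (a : ℚ) (k : ℕ) : ℚ := ∏ j ∈ Finset.range k, (a + (j : ℚ))

/-- `A ≡ B (mod p^m)` for rationals `A`, `B`: either `A = B` or the `p`-adic
valuation of `A - B` is at least `m`. -/
def ratCongr (p : ℕ) (m : ℕ) (A B : ℚ) : Prop :=
  A = B ∨ (m : ℤ) ≤ padicValRat p (A - B)

/-!
Write `r k = (1/3)_k / k!`, `t k = (-1)^k (6k+1) (r k)^3` and `p = 3m + 1`. The triple sum is the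
sum of `t a * t b * t c` over `a + b + c < p`. In `ℤ_[p]` we have `1/3 ≡ -m (mod p)`, so
`r k ≡ (-1)^k C(m, k) (mod p)` for `k < p`, and `p ∣ r k` for `m < k < p` because of the factor
`1/3 + m = p/3`. Hence every term with an index above `m` vanishes mod `p^3`, and since `3m < p`
the remaining terms add up to the cube of
`∑_{k ≤ m} t k ≡ ∑_{k ≤ m} (6k+1) C(m, k)^3 = p ∑_{k ≤ m} C(m, k)^3 ≡ 0 (mod p)`,
the equality by the symmetry `k ↦ m - k`.
-/

open Finset PowerSeries Nat

section CubeSum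

variable {R : Type*} [CommRing R]

def cubeSum (t : ℕ → R) (n : ℕ) : R :=
  ∑ k ∈ range n, ∑ j ∈ range (k + 1), ∑ i ∈ range (k - j + 1), t i * t j * t (k - j - i)

lemma coeff_mk_pow_three (t : ℕ → R) (k : ℕ) :
    coeff k (mk t ^ 3) =
      ∑ j ∈ range (k + 1), ∑ i ∈ range (k - j + 1), t i * t j * t (k - j - i) := by
  rw [pow_three, coeff_mul, Nat.sum_antidiagonal_eq_sum_range_succ_mk]
  refine sum_congr rfl fun j _ => ?_
  rw [coeff_mul, Nat.sum_antidiagonal_eq_sum_range_succ_mk, mul_sum]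
  refine sum_congr rfl fun i _ => ?_
  simp only [coeff_mk]
  ring

lemma map_cubeSum {S : Type*} [CommRing S] (f : R →+* S) (t : ℕ → R) (n : ℕ) :
    f (cubeSum t n) = cubeSum (f ∘ t) n := by
  simp [cubeSum]

lemma cubeSum_congr {t s : ℕ → R} {n : ℕ} (h : ∀ k < n, t k = s k) :
    cubeSum t n = cubeSum s n := by
  refine sum_congr rfl fun k hk => sum_congr rfl fun j hj => sum_congr rfl fun i hi => ?_
  simp only [mem_range] at hk hj hi
  rw [h i (by omega), h j (by omega), h (k - j - i) (by omega)]

lemma cubeSum_eq_pow_three {t : ℕ → R} {m n : ℕ} (hmn : 3 * m < n)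
    (ht : ∀ k, m < k → k < n → t k = 0) :
    cubeSum t n = (∑ k ∈ range (m + 1), t k) ^ 3 := by
  set P := trunc (m + 1) (mk t)
  have hP : trunc n (mk t) = trunc n (P : R⟦X⟧) := by
    ext k
    simp only [coeff_trunc, Polynomial.coeff_coe, coeff_mk, P]
    split_ifs <;> first | rfl | exact ht k (by omega) (by omega)
  have hdeg : (P ^ 3).natDegree < n := by
    have hPdeg : P.natDegree < m + 1 := natDegree_trunc_lt _ _
    exact Polynomial.natDegree_pow_le.trans_lt (by omega)
  calc cubeSum t n = ∑ k ∈ range n, (P ^ 3).coeff k := by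
        refine sum_congr rfl fun k hk => ?_
        rw [← coeff_mk_pow_three, ← coeff_coe_trunc_of_lt (mem_range.1 hk), ← trunc_trunc_pow,
          hP, trunc_trunc_pow, ← Polynomial.coe_pow, coeff_coe_trunc_of_lt (mem_range.1 hk),
          Polynomial.coeff_coe]
    _ = (P ^ 3).eval 1 := by simp [Polynomial.eval_eq_sum_range' hdeg]
    _ = (∑ k ∈ range (m + 1), t k) ^ 3 := by
        rw [Polynomial.eval_pow, Polynomial.eval_eq_sum_range' (natDegree_trunc_lt (mk t) m)]
        refine congrArg (· ^ 3) (sum_congr rfl fun k hk => ?_)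
        simp [coeff_trunc, mem_range.1 hk]

lemma pow_three_dvd_cubeSum {t : ℕ → R} {m n : ℕ} {y : R} (hmn : 3 * m < n)
    (htail : ∀ k, m < k → k < n → y ^ 3 ∣ t k) (hhead : y ∣ ∑ k ∈ range (m + 1), t k) :
    y ^ 3 ∣ cubeSum t n := by
  let π := Ideal.Quotient.mk (Ideal.span {y ^ 3})
  have hπ {x : R} : π x = 0 ↔ y ^ 3 ∣ x := by
    rw [Ideal.Quotient.eq_zero_iff_mem, Ideal.mem_span_singleton]
  rw [← hπ, map_cubeSum,
    cubeSum_eq_pow_three (t := π ∘ t) hmn fun k hmk hkn => hπ.2 (htail k hmk hkn)]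
  simp only [Function.comp_apply]
  rw [← map_sum, ← map_pow, hπ]
  exact pow_dvd_pow_of_dvd hhead 3

end CubeSum

lemma prod_range_natCast_sub_eq_choose (R : Type*) [CommRing R] (m k : ℕ) :
    ∏ j ∈ range k, ((j : R) - m) = (-1) ^ k * k ! * m.choose k := by
  calc ∏ j ∈ range k, ((j : R) - m) = ∏ j ∈ range k, -((m : R) - j) := by simp only [neg_sub]
    _ = (-1) ^ k * (m.descFactorial k : R) := by
        rw [prod_neg, card_range, ← descPochhammer_eval_eq_prod_range,
          descPochhammer_eval_eq_descFactorial]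
    _ = (-1) ^ k * k ! * m.choose k := by
        rw [descFactorial_eq_factorial_mul_choose, cast_mul, mul_assoc]

lemma sum_range_six_mul_add_one_mul_choose_pow_three (m : ℕ) :
    ∑ k ∈ range (m + 1), (6 * k + 1) * m.choose k ^ 3 =
      (3 * m + 1) * ∑ k ∈ range (m + 1), m.choose k ^ 3 := by
  have hreflect : ∑ k ∈ range (m + 1), (6 * (m - k) + 1) * m.choose k ^ 3 =
      ∑ k ∈ range (m + 1), (6 * k + 1) * m.choose k ^ 3 := by
    rw [← sum_range_reflect]
    refine sum_congr rfl fun k hk => ?_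
    have hkm : k ≤ m := Nat.lt_succ_iff.1 (mem_range.1 hk)
    rw [add_tsub_cancel_right, choose_symm hkm, Nat.sub_sub_self hkm]
  have hpair : ∑ k ∈ range (m + 1), ((6 * k + 1) * m.choose k ^ 3 +
      (6 * (m - k) + 1) * m.choose k ^ 3) =
        2 * ((3 * m + 1) * ∑ k ∈ range (m + 1), m.choose k ^ 3) := by
    rw [mul_sum, mul_sum]
    refine sum_congr rfl fun k hk => ?_
    have hkm : k ≤ m := Nat.lt_succ_iff.1 (mem_range.1 hk)
    rw [← add_mul, ← mul_assoc]
    congr 1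
    omega
  rw [sum_add_distrib, hreflect] at hpair
  omega

def seriesTerm {R : Type*} [CommRing R] (r : ℕ → R) (k : ℕ) : R :=
  (-1) ^ k * (6 * k + 1) * r k ^ 3

namespace PadicInt

variable {p : ℕ} [hp : Fact p.Prime]

lemma coe_inv_of_norm_eq_one {z : ℤ_[p]} (hz : ‖z‖ = 1) : (z.inv : ℚ_[p]) = (z : ℚ_[p])⁻¹ :=
  eq_inv_of_mul_eq_one_left (by rw [← coe_mul, inv_mul hz, coe_one])

lemma norm_three_eq_one (hp3 : p ≠ 3) : ‖(3 : ℤ_[p])‖ = 1 := by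
  have h := norm_natCast_eq_one_iff (p := p) (n := 3)
  rw [Nat.cast_ofNat] at h
  exact h.2 ((Nat.coprime_primes hp.out Nat.prime_three).2 hp3)

lemma norm_factorial_eq_one {k : ℕ} (hk : k < p) : ‖(k ! : ℤ_[p])‖ = 1 := by
  rw [norm_natCast_eq_one_iff, Nat.Prime.coprime_iff_not_dvd hp.out, hp.out.dvd_factorial]
  omega

lemma coe_prod {α : Type*} (s : Finset α) (f : α → ℤ_[p]) :
    ((∏ z ∈ s, f z : ℤ_[p]) : ℚ_[p]) = ∏ z ∈ s, (f z : ℚ_[p]) :=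
  map_prod Coe.ringHom f s

-- `PadicInt.inv` is `0` off the units, so this lifts `(1/3)_k / k!` only for `p ≠ 3` and `k < p`.
noncomputable def pochThird (k : ℕ) : ℤ_[p] :=
  (∏ j ∈ range k, ((3 : ℤ_[p]).inv + j)) * (k ! : ℤ_[p]).inv

lemma coe_pochThird (hp3 : p ≠ 3) {k : ℕ} (hk : k < p) :
    ((pochThird k : ℤ_[p]) : ℚ_[p]) = ((poch (1 / 3) k / k ! : ℚ) : ℚ_[p]) := by
  have hprod : ((∏ j ∈ range k, ((3 : ℤ_[p]).inv + j) : ℤ_[p]) : ℚ_[p]) =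
      ∏ j ∈ range k, ((1 / 3 : ℚ_[p]) + j) := by
    rw [coe_prod]
    refine prod_congr rfl fun j _ => ?_
    have h3 : ((3 : ℤ_[p]) : ℚ_[p]) = 3 := by norm_cast
    push_cast [coe_inv_of_norm_eq_one (norm_three_eq_one hp3), h3, one_div]
    rfl
  rw [pochThird, coe_mul, coe_inv_of_norm_eq_one (norm_factorial_eq_one hk), hprod]
  simp [poch, div_eq_mul_inv]

lemma p_dvd_pochThird {m k : ℕ} (hpm : p = 3 * m + 1) (hk : m < k) :
    (p : ℤ_[p]) ∣ pochThird k := by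
  have h3 := inv_mul (norm_three_eq_one (p := p) (by omega))
  refine Dvd.dvd.mul_right (dvd_trans ?_ (dvd_prod_of_mem _ (mem_range.2 hk))) _
  have hpm' : (p : ℤ_[p]) = 3 * m + 1 := by exact_mod_cast congrArg (Nat.cast : ℕ → ℤ_[p]) hpm
  exact ⟨(3 : ℤ_[p]).inv, by linear_combination (-(m : ℤ_[p])) * h3 - (3 : ℤ_[p]).inv * hpm'⟩

lemma toZMod_pochThird {m k : ℕ} (hpm : p = 3 * m + 1) (hk : k < p) :
    toZMod (pochThird k : ℤ_[p]) = (-1) ^ k * m.choose k := by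
  have hinv3 : toZMod (3 : ℤ_[p]).inv = -m := by
    have h := congrArg toZMod (inv_mul (norm_three_eq_one (p := p) (by omega)))
    rw [map_mul, map_one, map_ofNat] at h
    have hp0 : ((3 * m + 1 : ℕ) : ZMod p) = 0 := by rw [← hpm]; exact ZMod.natCast_self p
    push_cast at hp0
    linear_combination (-(m : ZMod p)) * h + toZMod (3 : ℤ_[p]).inv * hp0
  have hinvfact := congrArg toZMod (inv_mul (norm_factorial_eq_one hk))
  rw [map_mul, map_one, map_natCast] at hinvfact
  rw [pochThird, map_mul, map_prod]
  simp only [map_add, map_natCast, hinv3, neg_add_eq_sub, prod_range_natCast_sub_eq_choose]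
  linear_combination ((-1) ^ k * (m.choose k : ZMod p)) * hinvfact

lemma p_dvd_sum_seriesTerm_pochThird {m : ℕ} (hpm : p = 3 * m + 1) :
    (p : ℤ_[p]) ∣ ∑ k ∈ range (m + 1), seriesTerm pochThird k := by
  rw [← Ideal.mem_span_singleton, ← maximalIdeal_eq_span_p, ← ker_toZMod, RingHom.mem_ker,
    map_sum]
  have hterm : ∀ k ∈ range (m + 1),
      toZMod (seriesTerm pochThird k : ℤ_[p]) = (((6 * k + 1) * m.choose k ^ 3 : ℕ) : ZMod p) := by
    intro k hk
    have hsign : ((-1 : ZMod p) ^ k) ^ 4 = 1 := by rw [← pow_mul, mul_comm, pow_mul]; norm_num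
    simp only [seriesTerm, map_mul, map_pow, map_add, map_neg, map_one, map_natCast, map_ofNat]
    rw [toZMod_pochThird hpm (by simp at hk; omega)]
    push_cast
    linear_combination (6 * (k : ZMod p) + 1) * (m.choose k : ZMod p) ^ 3 * hsign
  rw [sum_congr rfl hterm, ← Nat.cast_sum, sum_range_six_mul_add_one_mul_choose_pow_three, ← hpm,
    Nat.cast_mul, ZMod.natCast_self, zero_mul]

lemma ratCongr_of_pow_dvd {q : ℚ} {x : ℤ_[p]} {n : ℕ} (hqx : (q : ℚ_[p]) = x)
    (hx : (p : ℤ_[p]) ^ n ∣ x) : ratCongr p n q 0 := by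
  rcases eq_or_ne q 0 with rfl | hq
  · exact Or.inl rfl
  have hx0 : x ≠ 0 := by rintro rfl; exact hq (by simpa using hqx)
  right
  rw [sub_zero, ← Padic.valuation_ratCast, hqx, valuation_coe, Nat.cast_le]
  exact (mem_span_pow_iff_le_valuation x hx0 n).1 (Ideal.mem_span_singleton.2 hx)

lemma ratCast_cubeSum_seriesTerm (hp3 : p ≠ 3) :
    ((cubeSum (seriesTerm fun k => poch (1 / 3) k / k !) p : ℚ) : ℚ_[p]) =
      (cubeSum (seriesTerm pochThird) p : ℤ_[p]) := by
  calc _ = cubeSum (Rat.castHom ℚ_[p] ∘ seriesTerm fun k => poch (1 / 3) k / k !) p :=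
        map_cubeSum _ _ _
    _ = cubeSum (Coe.ringHom ∘ seriesTerm pochThird) p := by
        refine cubeSum_congr fun k hk => ?_
        change ((seriesTerm _ k : ℚ) : ℚ_[p]) = ((seriesTerm pochThird k : ℤ_[p]) : ℚ_[p])
        simp only [seriesTerm]
        push_cast [coe_pochThird hp3 hk]
        rfl
    _ = _ := (map_cubeSum _ _ _).symm

end PadicInt

lemma sum_poch_third_eq_cubeSum (n : ℕ) :
    (∑ k ∈ range n, ∑ j ∈ range (k + 1), ∑ i ∈ range (k - j + 1),
        (-1 : ℚ) ^ k * (poch (1 / 3) j ^ 3 / (j ! : ℚ) ^ 3) *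
          (poch (1 / 3) i ^ 3 / (i ! : ℚ) ^ 3) *
          (poch (1 / 3) (k - j - i) ^ 3 / ((k - j - i) ! : ℚ) ^ 3) *
          (6 * (i : ℚ) + 1) * (6 * (j : ℚ) + 1) * (6 * ((k - j - i : ℕ) : ℚ) + 1)) =
      cubeSum (seriesTerm fun k => poch (1 / 3) k / k !) n := by
  refine sum_congr rfl fun k _ => sum_congr rfl fun j hj => sum_congr rfl fun i hi => ?_
  have hsign : (-1 : ℚ) ^ k = (-1) ^ i * (-1) ^ j * (-1) ^ (k - j - i) := by
    simp only [mem_range] at hj hi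
    rw [← pow_add, ← pow_add]
    congr 1
    omega
  rw [hsign, seriesTerm, seriesTerm, seriesTerm]
  ring

theorem stmt_5 (p : ℕ) (hp : p.Prime) (hmod : p % 3 = 1) :
    ratCongr p 3
      (∑ k ∈ Finset.range p, ∑ j ∈ Finset.range (k + 1), ∑ i ∈ Finset.range (k - j + 1),
        (-1 : ℚ) ^ k * ((poch (1/3) (j)) ^ 3 / ((j).factorial : ℚ) ^ 3) *
          ((poch (1/3) (i)) ^ 3 / ((i).factorial : ℚ) ^ 3) *
          ((poch (1/3) (k - j - i)) ^ 3 / ((k - j - i).factorial : ℚ) ^ 3) *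
          (6 * ((i : ℕ) : ℚ) + 1) * (6 * ((j : ℕ) : ℚ) + 1) * (6 * ((k - j - i : ℕ) : ℚ) + 1))
      0 := by
  have := Fact.mk hp
  obtain ⟨m, hpm⟩ : ∃ m, p = 3 * m + 1 := ⟨p / 3, by omega⟩
  rw [sum_poch_third_eq_cubeSum]
  refine PadicInt.ratCongr_of_pow_dvd (PadicInt.ratCast_cubeSum_seriesTerm (by omega))
    (pow_three_dvd_cubeSum (by omega) (fun k hmk _ => ?_)
      (PadicInt.p_dvd_sum_seriesTerm_pochThird hpm))
  exact dvd_mul_of_dvd_right (pow_dvd_pow_of_dvd (PadicInt.p_dvd_pochThird hpm hmk) 3) _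
end

section
/- If p is a prime with p ≡ 1 (mod 4), then both of the following rational numbers are ≡ 0 (mod p^3): (i) ∑_{k=0}^{p−1} ∑_{j=0}^{k} ∑_{i=0}^{k−j} ((1/4)_j^4/(j!)^4)·((1/4)_i^4/(i!)^4)·((1/4)_{k−j−i}^4/((k−j−i)!)^4)·(8i+1)^3·(8j+1)^3·(8(k−j−i)+1)^3; and (ii) ∑_{k=0}^{p−1} ∑_{j=0}^{k} ∑_{i=0}^{k−j} ∑_{h=0}^{k−j−i} ((1/4)_j^4/(j!)^4)·((1/4)_i^4/(i!)^4)·((1/4)_h^4/(h!)^4)·((1/4)_{k−j−i−h}^4/((k−j−i−h)!)^4)·(8i+1)^3·(8j+1)^3·(8h+1)^3·(8(k−j−i−h)+1)^3. -/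
open Finset PowerSeries
open scoped Nat

section NormBounds

variable {R : Type*} [NormedCommRing R]

lemma norm_mul_le_of_norm_le_one_right {x y : R} {c : ℝ} (hx : ‖x‖ ≤ c) (hy : ‖y‖ ≤ 1) :
    ‖x * y‖ ≤ c :=
  (norm_mul_le x y).trans ((mul_le_of_le_one_right (norm_nonneg x) hy).trans hx)

lemma norm_mul_le_of_norm_le_one_left {x y : R} {c : ℝ} (hx : ‖x‖ ≤ 1) (hy : ‖y‖ ≤ c) :
    ‖x * y‖ ≤ c :=
  mul_comm x y ▸ norm_mul_le_of_norm_le_one_right hy hx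

lemma norm_prod_le_one [NormOneClass R] {ι : Type*} {s : Finset ι} {f : ι → R}
    (hf : ∀ i ∈ s, ‖f i‖ ≤ 1) : ‖∏ i ∈ s, f i‖ ≤ 1 :=
  (s.norm_prod_le f).trans (prod_le_one (fun _ _ => norm_nonneg _) hf)

end NormBounds

namespace IsUltrametricDist

lemma norm_sub_le_max {E : Type*} [SeminormedAddGroup E] [IsUltrametricDist E] (x y : E) :
    ‖x - y‖ ≤ max ‖x‖ ‖y‖ := by
  simpa [sub_eq_add_neg] using norm_add_le_max x (-y)

variable {R : Type*} [NormedCommRing R]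

lemma norm_mul_sub_mul_le [IsUltrametricDist R] {x y x' y' : R} {c : ℝ} (hx : ‖x‖ ≤ 1)
    (hy' : ‖y'‖ ≤ 1) (hxx' : ‖x - x'‖ ≤ c) (hyy' : ‖y - y'‖ ≤ c) : ‖x * y - x' * y'‖ ≤ c := by
  rw [show x * y - x' * y' = x * (y - y') + (x - x') * y' by ring]
  exact (norm_add_le_max _ _).trans (max_le (norm_mul_le_of_norm_le_one_left hx hyy')
    (norm_mul_le_of_norm_le_one_right hxx' hy'))

lemma norm_prod_sub_prod_le [NormOneClass R] [IsUltrametricDist R] {ι : Type*} [DecidableEq ι]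
    {s : Finset ι} {f g : ι → R} {c : ℝ} (hc : 0 ≤ c) (hf : ∀ i ∈ s, ‖f i‖ ≤ 1)
    (hg : ∀ i ∈ s, ‖g i‖ ≤ 1) (hfg : ∀ i ∈ s, ‖f i - g i‖ ≤ c) :
    ‖∏ i ∈ s, f i - ∏ i ∈ s, g i‖ ≤ c := by
  induction s using Finset.induction_on with
  | empty => simpa using hc
  | insert i s hi ih =>
    simp only [mem_insert, forall_eq_or_imp] at hf hg hfg
    rw [prod_insert hi, prod_insert hi]
    exact norm_mul_sub_mul_le hf.1 (norm_prod_le_one hg.2) hfg.1 (ih hf.2 hg.2 hfg.2)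

lemma norm_pow_sub_pow_le [NormOneClass R] [IsUltrametricDist R] {x y : R} {c : ℝ} (hc : 0 ≤ c)
    (hx : ‖x‖ ≤ 1) (hy : ‖y‖ ≤ 1) (hxy : ‖x - y‖ ≤ c) (k : ℕ) : ‖x ^ k - y ^ k‖ ≤ c := by
  simpa using norm_prod_sub_prod_le (s := range k) (f := fun _ => x) (g := fun _ => y) hc
    (fun _ _ => hx) (fun _ _ => hy) (fun _ _ => hxy)

end IsUltrametricDist

namespace PowerSeries

section CommSemiring

variable {R : Type*} [CommSemiring R]

lemma coeff_mk_mul (f : ℕ → R) (G : R⟦X⟧) (k : ℕ) :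
    coeff k (mk f * G) = ∑ j ∈ range (k + 1), f j * coeff (k - j) G := by
  rw [coeff_mul, Nat.sum_antidiagonal_eq_sum_range_succ (fun i j => coeff i (mk f) * coeff j G)]
  simp only [coeff_mk]

lemma sum_range_coeff_mk_mul (f : ℕ → R) (G : R⟦X⟧) (r : ℕ) :
    ∑ k ∈ range r, coeff k (mk f * G) = ∑ j ∈ range r, f j * ∑ k ∈ range (r - j), coeff k G := by
  have hswap : ∑ k ∈ range r, ∑ j ∈ range (k + 1), f j * coeff (k - j) G =
      ∑ j ∈ range r, ∑ k ∈ Ico j r, f j * coeff (k - j) G := by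
    simp_rw [range_eq_Ico]
    rw [sum_Ico_Ico_comm]
  simp_rw [coeff_mk_mul, hswap, sum_Ico_eq_sum_range, mul_sum, Nat.add_sub_cancel_left]

lemma sum_coeff_mk_pow_three (f : ℕ → R) (r : ℕ) :
    ∑ k ∈ range r, coeff k (mk f ^ 3) =
      ∑ k ∈ range r, ∑ j ∈ range (k + 1), ∑ i ∈ range (k - j + 1), f j * f i * f (k - j - i) := by
  rw [show mk f ^ 3 = mk f * (mk f * mk f) by ring]
  simp only [coeff_mk_mul, coeff_mk, mul_sum, mul_assoc]

lemma sum_coeff_mk_pow_four (f : ℕ → R) (r : ℕ) :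
    ∑ k ∈ range r, coeff k (mk f ^ 4) =
      ∑ k ∈ range r, ∑ j ∈ range (k + 1), ∑ i ∈ range (k - j + 1), ∑ h ∈ range (k - j - i + 1),
        f j * f i * f h * f (k - j - i - h) := by
  rw [show mk f ^ 4 = mk f * (mk f * (mk f * mk f)) by ring]
  simp only [coeff_mk_mul, coeff_mk, mul_sum, mul_assoc]

end CommSemiring

section Ultrametric

variable {R : Type*} [NormedCommRing R] [NormOneClass R] [IsUltrametricDist R]
  {f : ℕ → R} {N : ℕ}

lemma norm_sum_coeff_pow_le_one (hf : ∀ j < N, ‖f j‖ ≤ 1) (d : ℕ) {r : ℕ} (hr : r ≤ N) :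
    ‖∑ k ∈ range r, coeff k (mk f ^ d)‖ ≤ 1 := by
  induction d generalizing r with
  | zero =>
    refine IsUltrametricDist.norm_sum_le_of_forall_le_of_nonneg zero_le_one fun k _ => ?_
    rw [pow_zero, coeff_one]
    split_ifs <;> simp
  | succ d ih =>
    rw [pow_succ', sum_range_coeff_mk_mul]
    refine IsUltrametricDist.norm_sum_le_of_forall_le_of_nonneg zero_le_one fun j hj => ?_
    have hj : j < r := mem_range.mp hj
    exact norm_mul_le_of_norm_le_one_left (hf j (by omega)) (ih (by omega))

/-- Every index tuple counted by the difference has sum at least `r > d * n`, hence an entry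
above `n`. -/
lemma norm_pow_sub_sum_coeff_pow_le {n : ℕ} {ε : ℝ} (hε : 0 ≤ ε)
    (hf : ∀ j < N, ‖f j‖ ≤ 1) (hfε : ∀ j, n < j → j < N → ‖f j‖ ≤ ε) (d : ℕ) {r : ℕ}
    (hdr : d * n < r) (hr : r ≤ N) :
    ‖(∑ j ∈ range N, f j) ^ d - ∑ k ∈ range r, coeff k (mk f ^ d)‖ ≤ ε := by
  set A := ∑ j ∈ range N, f j
  have hA : ∀ e, ‖A ^ e‖ ≤ 1 := fun e =>
    (_root_.norm_pow_le _ _).trans (pow_le_one₀ (norm_nonneg _)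
      (IsUltrametricDist.norm_sum_le_of_forall_le_of_nonneg zero_le_one
        fun j hj => hf j (mem_range.mp hj)))
  induction d generalizing r with
  | zero =>
    have h0 : (0 : ℕ) ∈ range r := mem_range.mpr (by omega)
    simp [coeff_one, h0, hε]
  | succ d ih =>
    have hsplit : A ^ (d + 1) - ∑ k ∈ range r, coeff k (mk f ^ (d + 1)) =
        ∑ j ∈ Ico r N, f j * A ^ d +
          ∑ j ∈ range r, f j * (A ^ d - ∑ k ∈ range (r - j), coeff k (mk f ^ d)) := by
      rw [pow_succ' (mk f), sum_range_coeff_mk_mul, pow_succ', sum_mul,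
        ← sum_range_add_sum_Ico _ hr]
      simp only [mul_sub, sum_sub_distrib]
      ring
    rw [add_mul, one_mul] at hdr
    rw [hsplit]
    refine (IsUltrametricDist.norm_add_le_max _ _).trans (max_le ?_ ?_)
    · refine IsUltrametricDist.norm_sum_le_of_forall_le_of_nonneg hε fun j hj => ?_
      obtain ⟨hrj, hjN⟩ := mem_Ico.mp hj
      exact norm_mul_le_of_norm_le_one_right (hfε j (by omega) hjN) (hA d)
    · refine IsUltrametricDist.norm_sum_le_of_forall_le_of_nonneg hε fun j hj => ?_
      have hjr : j < r := mem_range.mp hj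
      rcases le_or_gt j n with hjn | hjn
      · exact norm_mul_le_of_norm_le_one_left (hf j (by omega)) (ih (by omega) (by omega))
      · refine norm_mul_le_of_norm_le_one_right (hfε j hjn (by omega)) ?_
        exact (IsUltrametricDist.norm_sub_le_max _ _).trans
          (max_le (hA d) (norm_sum_coeff_pow_le_one hf d (by omega)))

end Ultrametric

end PowerSeries

lemma poch_neg_natCast (n m : ℕ) : poch (-n) m = (-1) ^ m * m ! * n.choose m := by
  have hasc : poch (-n) m = (ascPochhammer ℚ m).eval (-(n : ℚ)) := by
    induction m with
    | zero => simp [poch]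
    | succ m ih => simp [poch, prod_range_succ, ascPochhammer_succ_right, ← ih]
  rw [hasc, ascPochhammer_eval_neg_eq_descPochhammer, descPochhammer_eval_eq_descFactorial,
    Nat.descFactorial_eq_factorial_mul_choose]
  push_cast
  ring

lemma sum_choose_pow_mul_pow_odd (n k : ℕ) {l : ℕ} (hl : Odd l) :
    ∑ m ∈ range (n + 1), (n.choose m : ℚ) ^ k * (2 * m - n) ^ l = 0 := by
  have hS : ∑ m ∈ range (n + 1), (n.choose m : ℚ) ^ k * (2 * m - n) ^ l =
      -∑ m ∈ range (n + 1), (n.choose m : ℚ) ^ k * (2 * m - n) ^ l := by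
    conv_lhs => rw [← sum_range_reflect]
    rw [← sum_neg_distrib]
    refine sum_congr rfl fun m hm => ?_
    have hmn : m ≤ n := Nat.lt_succ_iff.mp (mem_range.mp hm)
    rw [show n + 1 - 1 - m = n - m by omega, Nat.choose_symm hmn, Nat.cast_sub hmn,
      show 2 * ((n : ℚ) - m) - n = -(2 * m - n) by ring, hl.neg_pow]
    ring
  linarith

section Padic

variable {p : ℕ} [Fact p.Prime]

lemma ratCongr_zero_of_norm_le {S : ℚ} {m : ℕ} (h : ‖(S : ℚ_[p])‖ ≤ (p : ℝ)⁻¹ ^ m) :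
    ratCongr p m S 0 := by
  rcases eq_or_ne S 0 with hS | hS
  · exact Or.inl hS
  right
  rw [sub_zero, ← Padic.valuation_ratCast]
  rw [Padic.norm_eq_zpow_neg_valuation (by exact_mod_cast hS), inv_pow, ← zpow_natCast,
    ← zpow_neg] at h
  have hp : (1 : ℝ) < p := by exact_mod_cast (Fact.out : p.Prime).one_lt
  exact neg_le_neg_iff.mp ((zpow_le_zpow_iff_right₀ hp).mp h)

lemma Padic.norm_natCast_le_one (k : ℕ) : ‖(k : ℚ_[p])‖ ≤ 1 := by
  exact_mod_cast Padic.norm_int_le_one (k : ℤ)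

lemma Padic.norm_factorial_eq_one {m : ℕ} (hm : m < p) : ‖(m ! : ℚ_[p])‖ = 1 := by
  rw [Padic.norm_natCast_eq_one_iff, Nat.Prime.coprime_iff_not_dvd Fact.out,
    Nat.Prime.dvd_factorial Fact.out]
  omega

lemma cast_poch (a : ℚ) (m : ℕ) :
    ((poch a m : ℚ) : ℚ_[p]) = ∏ j ∈ range m, ((a : ℚ_[p]) + j) := by
  simp [poch]

lemma norm_poch_neg_natCast_le_one (n m : ℕ) : ‖(poch (-n) m : ℚ_[p])‖ ≤ 1 := by
  push_cast [cast_poch]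
  exact norm_prod_le_one fun j _ => by exact_mod_cast Padic.norm_int_le_one (-n + j : ℤ)

end Padic

def quarterTerm (m : ℕ) : ℚ := poch (1 / 4) m ^ 4 / (m ! : ℚ) ^ 4 * (8 * m + 1) ^ 3

lemma quarterTerm_mul_three (j i l : ℕ) :
    poch (1 / 4) j ^ 4 / (j ! : ℚ) ^ 4 * (poch (1 / 4) i ^ 4 / (i ! : ℚ) ^ 4) *
        (poch (1 / 4) l ^ 4 / (l ! : ℚ) ^ 4) *
        (8 * (i : ℚ) + 1) ^ 3 * (8 * (j : ℚ) + 1) ^ 3 * (8 * (l : ℚ) + 1) ^ 3 =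
      quarterTerm j * quarterTerm i * quarterTerm l := by
  simp only [quarterTerm]
  ring

lemma quarterTerm_mul_four (j i h l : ℕ) :
    poch (1 / 4) j ^ 4 / (j ! : ℚ) ^ 4 * (poch (1 / 4) i ^ 4 / (i ! : ℚ) ^ 4) *
        (poch (1 / 4) h ^ 4 / (h ! : ℚ) ^ 4) * (poch (1 / 4) l ^ 4 / (l ! : ℚ) ^ 4) *
        (8 * (i : ℚ) + 1) ^ 3 * (8 * (j : ℚ) + 1) ^ 3 * (8 * (h : ℚ) + 1) ^ 3 *
        (8 * (l : ℚ) + 1) ^ 3 =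
      quarterTerm j * quarterTerm i * quarterTerm h * quarterTerm l := by
  simp only [quarterTerm]
  ring

lemma norm_quarterTerm_eq {p : ℕ} [Fact p.Prime] {m : ℕ} (hm : m < p) :
    ‖(quarterTerm m : ℚ_[p])‖ =
      ‖(poch (1 / 4) m : ℚ_[p])‖ ^ 4 * ‖((8 * m + 1 : ℕ) : ℚ_[p])‖ ^ 3 := by
  rw [quarterTerm]
  push_cast
  rw [norm_mul, norm_div, norm_pow, norm_pow, norm_pow, Padic.norm_factorial_eq_one hm, one_pow,
    div_one]

namespace OneModFour

variable {p n : ℕ} [Fact p.Prime]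

lemma cast_prime_eq (hpn : p = 4 * n + 1) : (p : ℚ_[p]) = 4 * n + 1 := by
  rw [show (p : ℚ_[p]) = ((4 * n + 1 : ℕ) : ℚ_[p]) by rw [← hpn]]
  push_cast
  rfl

lemma norm_four (hpn : p = 4 * n + 1) : ‖(4 : ℚ_[p])‖ = 1 := by
  have h4 : ¬ p ∣ 4 := fun h => by
    have := Nat.le_of_dvd (by norm_num) h
    have := (Fact.out : p.Prime).two_le
    omega
  exact_mod_cast Padic.norm_natCast_eq_one_iff.mpr
    ((Nat.Prime.coprime_iff_not_dvd Fact.out).mpr h4)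

lemma norm_quarter_add_le_one (hpn : p = 4 * n + 1) (j : ℕ) : ‖(1 / 4 + j : ℚ_[p])‖ ≤ 1 := by
  rw [show (1 / 4 + j : ℚ_[p]) = ((4 * j + 1 : ℕ) : ℚ_[p]) / 4 by push_cast; ring, norm_div,
    norm_four hpn, div_one]
  exact Padic.norm_natCast_le_one _

lemma norm_quarter_add_eq (hpn : p = 4 * n + 1) : ‖(1 / 4 + n : ℚ_[p])‖ = (p : ℝ)⁻¹ := by
  rw [show (1 / 4 + n : ℚ_[p]) = p / 4 by rw [cast_prime_eq hpn]; ring, norm_div, norm_four hpn,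
    div_one, Padic.norm_p]

lemma norm_poch_quarter_le_one (hpn : p = 4 * n + 1) (m : ℕ) :
    ‖(poch (1 / 4) m : ℚ_[p])‖ ≤ 1 := by
  rw [cast_poch]
  push_cast
  exact norm_prod_le_one fun j _ => norm_quarter_add_le_one hpn j

lemma norm_poch_quarter_le (hpn : p = 4 * n + 1) {m : ℕ} (hm : n < m) :
    ‖(poch (1 / 4) m : ℚ_[p])‖ ≤ (p : ℝ)⁻¹ := by
  rw [cast_poch, ← mul_prod_erase _ _ (mem_range.mpr hm), norm_mul]
  push_cast
  rw [norm_quarter_add_eq hpn]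
  exact mul_le_of_le_one_right (by positivity)
    (norm_prod_le_one fun j _ => norm_quarter_add_le_one hpn j)

lemma norm_poch_quarter_sub_poch_neg_le (hpn : p = 4 * n + 1) (m : ℕ) :
    ‖(poch (1 / 4) m - poch (-n) m : ℚ_[p])‖ ≤ (p : ℝ)⁻¹ := by
  push_cast [cast_poch]
  refine IsUltrametricDist.norm_prod_sub_prod_le (by positivity)
    (fun j _ => norm_quarter_add_le_one hpn j) (fun j _ => ?_) (fun j _ => ?_)
  · exact_mod_cast Padic.norm_int_le_one (-n + j : ℤ)
  · rw [add_sub_add_right_eq_sub, sub_neg_eq_add, norm_quarter_add_eq hpn]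

lemma norm_quarterTerm_le_one (hpn : p = 4 * n + 1) {m : ℕ} (hm : m < p) :
    ‖(quarterTerm m : ℚ_[p])‖ ≤ 1 := by
  rw [norm_quarterTerm_eq hm]
  exact mul_le_one₀ (pow_le_one₀ (norm_nonneg _) (norm_poch_quarter_le_one hpn m))
    (by positivity) (pow_le_one₀ (norm_nonneg _) (Padic.norm_natCast_le_one _))

lemma norm_quarterTerm_le (hpn : p = 4 * n + 1) {m : ℕ} (hnm : n < m) (hm : m < p) :
    ‖(quarterTerm m : ℚ_[p])‖ ≤ (p : ℝ)⁻¹ ^ 4 := by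
  rw [norm_quarterTerm_eq hm]
  exact (mul_le_of_le_one_right (by positivity)
      (pow_le_one₀ (norm_nonneg _) (Padic.norm_natCast_le_one _))).trans
    (pow_le_pow_left₀ (norm_nonneg _) (norm_poch_quarter_le hpn hnm) 4)

lemma norm_quarterTerm_sub_le (hpn : p = 4 * n + 1) {m : ℕ} (hm : m < p) :
    ‖((quarterTerm m - n.choose m ^ 4 * (4 * (2 * m - n)) ^ 3 : ℚ) : ℚ_[p])‖ ≤ (p : ℝ)⁻¹ := by
  have hdiff : quarterTerm m - n.choose m ^ 4 * (4 * (2 * m - n)) ^ 3 =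
      (poch (1 / 4) m ^ 4 * (8 * m + 1) ^ 3 - poch (-n) m ^ 4 * (4 * (2 * m - n)) ^ 3) /
        (m ! : ℚ) ^ 4 := by
    have hpoch : poch (-n) m ^ 4 = (m ! : ℚ) ^ 4 * n.choose m ^ 4 := by
      rw [poch_neg_natCast, mul_pow, mul_pow, ← pow_mul, mul_comm m, pow_mul]
      norm_num
    rw [quarterTerm, hpoch]
    field_simp
  have hp : (0 : ℝ) ≤ (p : ℝ)⁻¹ := by positivity
  have hlin : ‖(8 * m + 1 - 4 * (2 * m - n) : ℚ_[p])‖ = (p : ℝ)⁻¹ := by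
    rw [← Padic.norm_p, cast_prime_eq hpn]
    ring_nf
  have hint : ‖(4 * (2 * m - n) : ℚ_[p])‖ ≤ 1 := by
    have := Padic.norm_int_le_one (p := p) (4 * (2 * m - n))
    push_cast at this
    exact this
  have h8 : ‖(8 * m + 1 : ℚ_[p])‖ ≤ 1 := by
    exact_mod_cast Padic.norm_natCast_le_one (p := p) (8 * m + 1)
  rw [hdiff]
  push_cast
  rw [norm_div, norm_pow, Padic.norm_factorial_eq_one hm, one_pow, div_one]
  refine IsUltrametricDist.norm_mul_sub_mul_le (R := ℚ_[p]) ?_ ?_ ?_ ?_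
  · rw [norm_pow]
    exact pow_le_one₀ (norm_nonneg _) (norm_poch_quarter_le_one hpn m)
  · rw [norm_pow]
    exact pow_le_one₀ (norm_nonneg _) hint
  · exact IsUltrametricDist.norm_pow_sub_pow_le hp (norm_poch_quarter_le_one hpn m)
      (norm_poch_neg_natCast_le_one n m) (norm_poch_quarter_sub_poch_neg_le hpn m) 4
  · exact IsUltrametricDist.norm_pow_sub_pow_le hp h8 hint hlin.le 3

lemma norm_sum_quarterTerm_le (hpn : p = 4 * n + 1) :
    ‖∑ m ∈ range p, (quarterTerm m : ℚ_[p])‖ ≤ (p : ℝ)⁻¹ := by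
  have hzero : ∑ m ∈ range p, (n.choose m : ℚ) ^ 4 * (4 * (2 * m - n)) ^ 3 = 0 := by
    rw [← sum_subset (range_subset_range.mpr (show n + 1 ≤ p by omega)) fun m _ hm => by
      rw [Nat.choose_eq_zero_of_lt (by simpa using hm)]; simp]
    simp_rw [mul_pow (4 : ℚ), mul_left_comm _ ((4 : ℚ) ^ 3)]
    rw [← mul_sum, sum_choose_pow_mul_pow_odd n 4 (by decide), mul_zero]
  rw [← Rat.cast_sum, ← sub_zero (∑ m ∈ range p, quarterTerm m), ← hzero, ← sum_sub_distrib,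
    Rat.cast_sum]
  exact IsUltrametricDist.norm_sum_le_of_forall_le_of_nonneg (by positivity)
    fun m hm => norm_quarterTerm_sub_le hpn (mem_range.mp hm)

lemma norm_sum_coeff_pow_quarterTerm_le (hpn : p = 4 * n + 1) {d : ℕ} (hd3 : 3 ≤ d)
    (hd4 : d ≤ 4) :
    ‖∑ k ∈ range p, coeff k (mk (fun m => (quarterTerm m : ℚ_[p])) ^ d)‖ ≤ (p : ℝ)⁻¹ ^ 3 := by
  set A := ∑ m ∈ range p, (quarterTerm m : ℚ_[p])
  have hp1 : (p : ℝ)⁻¹ ≤ 1 :=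
    inv_le_one_of_one_le₀ (by exact_mod_cast (Fact.out : p.Prime).one_le)
  have htrunc := norm_pow_sub_sum_coeff_pow_le (by positivity)
    (fun j hj => norm_quarterTerm_le_one hpn hj) (fun j hnj hj => norm_quarterTerm_le hpn hnj hj)
    d (r := p) (by nlinarith) le_rfl
  rw [← sub_sub_cancel (A ^ d) (∑ k ∈ range p, _)]
  refine (IsUltrametricDist.norm_sub_le_max _ _).trans (max_le ?_ ?_)
  · rw [norm_pow]
    exact (pow_le_pow_left₀ (norm_nonneg _) (norm_sum_quarterTerm_le hpn) d).trans
      (pow_le_pow_of_le_one (by positivity) hp1 hd3)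
  · exact htrunc.trans (pow_le_pow_of_le_one (by positivity) hp1 (by norm_num))

end OneModFour

open OneModFour

theorem stmt_18 (p : ℕ) (hp : p.Prime) (hmod : p % 4 = 1) :
    ratCongr p 3
      (∑ k ∈ Finset.range p, ∑ j ∈ Finset.range (k + 1), ∑ i ∈ Finset.range (k - j + 1),
        ((poch (1/4) (j)) ^ 4 / ((j).factorial : ℚ) ^ 4) *
          ((poch (1/4) (i)) ^ 4 / ((i).factorial : ℚ) ^ 4) *
          ((poch (1/4) (k - j - i)) ^ 4 / ((k - j - i).factorial : ℚ) ^ 4) *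
          (8 * ((i : ℕ) : ℚ) + 1) ^ 3 * (8 * ((j : ℕ) : ℚ) + 1) ^ 3 * (8 * ((k - j - i : ℕ) : ℚ) + 1) ^ 3)
      0 ∧
    ratCongr p 3
      (∑ k ∈ Finset.range p, ∑ j ∈ Finset.range (k + 1), ∑ i ∈ Finset.range (k - j + 1),
        ∑ h ∈ Finset.range (k - j - i + 1),
        ((poch (1/4) (j)) ^ 4 / ((j).factorial : ℚ) ^ 4) *
          ((poch (1/4) (i)) ^ 4 / ((i).factorial : ℚ) ^ 4) *
          ((poch (1/4) (h)) ^ 4 / ((h).factorial : ℚ) ^ 4) *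
          ((poch (1/4) (k - j - i - h)) ^ 4 / ((k - j - i - h).factorial : ℚ) ^ 4) *
          (8 * ((i : ℕ) : ℚ) + 1) ^ 3 * (8 * ((j : ℕ) : ℚ) + 1) ^ 3 * (8 * ((h : ℕ) : ℚ) + 1) ^ 3 * (8 * ((k - j - i - h : ℕ) : ℚ) + 1) ^ 3)
      0 := by
  have : Fact p.Prime := ⟨hp⟩
  obtain ⟨n, hpn⟩ : ∃ n, p = 4 * n + 1 := ⟨p / 4, by omega⟩
  simp only [quarterTerm_mul_three, quarterTerm_mul_four]
  refine ⟨ratCongr_zero_of_norm_le ?_, ratCongr_zero_of_norm_le ?_⟩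
  · push_cast
    rw [← sum_coeff_mk_pow_three (fun m => (quarterTerm m : ℚ_[p]))]
    exact norm_sum_coeff_pow_quarterTerm_le hpn le_rfl (by norm_num)
  · push_cast
    rw [← sum_coeff_mk_pow_four (fun m => (quarterTerm m : ℚ_[p]))]
    exact norm_sum_coeff_pow_quarterTerm_le hpn (by norm_num) le_rfl
end
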